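/- Let E = O_{P^1}(-a1) ⊕ O_{P^1}(-a2) with 0 < a1 ≤ a2, and suppose A = O_{P^1} ⊕ E carries a structure of a sheaf of commutative O_{P^1}-algebras which is integral (torsion-free of rank 3 and the pushforward of the structure sheaf of an irreducible curve). Then the component of the multiplication map O(-a1) ⊗ O(-a1) → A landing in O(-a2) is nonzero; equivalently, O_{P^1} ⊕ O(-a1) is not a subalgebra, since the rank of an integral subalgebra of a rank-3 integral algebra must divide 3. -/
import Mathlib


/-!
STATEMENT 2.  A = φ_*O_C = O ⊕ O(-a1) ⊕ O(-a2) (0 < a1 ≤ a2) is a sheaf of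
commutative O_{P^1}-algebras which is integral of rank 3 (C an irreducible
curve).  Then the component O(-a1) ⊗ O(-a1) → O(-a2) of the multiplication is
nonzero; equivalently O ⊕ O(-a1) is not a subalgebra, since the rank of an
integral subalgebra of a rank-3 integral algebra must divide 3.

Encoding: pass to the generic point of P^1.  There A becomes a commutative
integral F-algebra A of dimension 3 over the function field F, the summand
O(-a1) becomes a 1-dimensional subspace L1 with 1·F ⊔ L1 of dimension 2, and
the claims become: some product of two elements of L1 lies outside
F·1 ⊔ L1 (nonzero component into the third summand), and F·1 ⊔ L1 is not
(the underlying module of) a subalgebra. -/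
theorem triple_cover_algebra_component_nonzero
    (F : Type*) [Field F] (A : Type*) [CommRing A] [IsDomain A]
    [Algebra F A] [Module.Finite F A]
    (hrank : Module.finrank F A = 3)
    (L1 : Submodule F A) (hL1 : Module.finrank F L1 = 1)
    (hdim2 : Module.finrank F ((1 : Submodule F A) ⊔ L1 : Submodule F A) = 2) :
    (∃ x ∈ L1, ∃ y ∈ L1, x * y ∉ (1 : Submodule F A) ⊔ L1) ∧
      ¬ ∃ B : Subalgebra F A,
          Subalgebra.toSubmodule B = (1 : Submodule F A) ⊔ L1 := by
  have key : ¬ ∃ B : Subalgebra F A,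
      Subalgebra.toSubmodule B = (1 : Submodule F A) ⊔ L1 := by
    rintro ⟨B, hB⟩
    have hBfin : Module.finrank F B = 2 := by
      rw [← hdim2, ← hB]; rfl
    have : Module.Finite F B := by
      have : Module.Finite F (Subalgebra.toSubmodule B) := by
        rw [hB]; infer_instance
      exact this
    have hint : Algebra.IsIntegral F B := Algebra.IsIntegral.of_finite F B
    have hField : IsField B := isField_of_isIntegral_of_isField' (Field.toIsField F)
    letI : Field B := hField.toField
    have htower := Module.finrank_mul_finrank F B A
    rw [hBfin, hrank] at htower
    omega
  refine ⟨?_, key⟩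
  by_contra h
  push_neg at h
  apply key
  have hone : (1 : A) ∈ (1 : Submodule F A) ⊔ L1 :=
    le_sup_left (α := Submodule F A) (Submodule.one_le.mp le_rfl)
  have hmul : ∀ x y, x ∈ (1 : Submodule F A) ⊔ L1 → y ∈ (1 : Submodule F A) ⊔ L1 →
      x * y ∈ (1 : Submodule F A) ⊔ L1 := by
    intro x y hx hy
    obtain ⟨p, hp, q, hq, rfl⟩ := Submodule.mem_sup.mp hx
    obtain ⟨r, hr, s, hs, rfl⟩ := Submodule.mem_sup.mp hy
    rw [Submodule.mem_one] at hp hr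
    obtain ⟨a, rfl⟩ := hp
    obtain ⟨b, rfl⟩ := hr
    have h1 : algebraMap F A a * algebraMap F A b ∈ (1 : Submodule F A) ⊔ L1 :=
      le_sup_left (α := Submodule F A) (Submodule.mem_one.mpr ⟨a * b, by simp⟩)
    have h2 : algebraMap F A a * s ∈ (1 : Submodule F A) ⊔ L1 := by
      rw [← Algebra.smul_def]
      exact le_sup_right (α := Submodule F A) (L1.smul_mem a hs)
    have h3 : q * algebraMap F A b ∈ (1 : Submodule F A) ⊔ L1 := by
      rw [mul_comm, ← Algebra.smul_def]
      exact le_sup_right (α := Submodule F A) (L1.smul_mem b hq)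
    have h4 : q * s ∈ (1 : Submodule F A) ⊔ L1 := h q hq s hs
    have : (algebraMap F A a + q) * (algebraMap F A b + s)
        = algebraMap F A a * algebraMap F A b + algebraMap F A a * s
          + q * algebraMap F A b + q * s := by ring
    rw [this]
    exact Submodule.add_mem _ (Submodule.add_mem _ (Submodule.add_mem _ h1 h2) h3) h4
  exact ⟨Submodule.toSubalgebra _ hone hmul, rfl⟩
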